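/- arXiv:math/0702203 — 3 statements merged into one kernel-verified Lean document; each statement's English description precedes it below -/
import Mathlib

section
/- Let q be a polynomial of degree (n,m) in two complex variables. If there exists c > 0 such that |q(z,w)|^2 - |q̃(z,w)|^2 ≥ c(1-|z|^2)(1-|w|^2) for all (z,w) in the closed bidisk, then q has no zeros in the closed bidisk. -/
open ComplexConjugate

/-- Evaluation of a two-variable polynomial of bidegree at most `(n, m)`
given by its coefficient array `a`. -/
noncomputable def evalP (n m : ℕ) (a : ℕ → ℕ → ℂ) (z w : ℂ) : ℂ :=
  ∑ j ∈ Finset.range (n + 1), ∑ k ∈ Finset.range (m + 1), a j k * z ^ j * w ^ k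

/-- The reflection at bidegree `(n,m)`: coefficients are reversed and conjugated. -/
noncomputable def reflP (n m : ℕ) (a : ℕ → ℕ → ℂ) (z w : ℂ) : ℂ :=
  evalP n m (fun j k => conj (a (n - j) (m - k))) z w

/-!
Suppose `q(z, w) = 0` on the closed bidisk and restrict `q` to the ray `f(t) = q(tz, tw)`,
`0 < t < 1`. As `f(1) = 0` and `f` is differentiable, `|f(t)|/(1 - t) → |f'(1)|`. Along the ray the
hypothesis gives `|f(t)|² - |q̃(tz, tw)|² ≥ c(1 - t²)(1 - t²|zw|²)`. If `|zw| < 1` the right-hand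
side is of exact order `1 - t`, too large for `|f(t)|² = O((1 - t)²)`. Otherwise `|z| = |w| = 1`,
where `q̃(tz, tw) = (tz)ⁿ(tw)ᵐ conj(f(1/t))`; so `|q̃(tz, tw)|/(1 - t)` also tends to `|f'(1)|`, and
dividing the hypothesis by `(1 - t)²` leaves `c ≤ 0` in the limit.
-/

open Filter Topology Set

section

variable {E : Type*} [NormedAddCommGroup E] [NormedSpace ℝ E] {f : ℝ → E} {D : E} {c : ℝ}

lemma tendsto_norm_div_abs_sub_of_hasDerivAt {x : ℝ} (hf : HasDerivAt f D x) (hfx : f x = 0) :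
    Tendsto (fun t => ‖f t‖ / |t - x|) (𝓝[≠] x) (𝓝 ‖D‖) := by
  refine ((hasDerivAt_iff_tendsto_slope.1 hf).norm).congr fun t => ?_
  rw [slope_def_module, hfx, sub_zero, norm_smul, norm_inv, Real.norm_eq_abs, inv_mul_eq_div]

lemma not_eventually_mul_sub_le_sq_norm {x : ℝ} (hf : HasDerivAt f D x) (hfx : f x = 0)
    (hc : 0 < c) : ¬ ∀ᶠ t in 𝓝[<] x, c * (x - t) ≤ ‖f t‖ ^ 2 := by
  intro hle
  have hlim : Tendsto (fun t => (x - t) * (‖f t‖ / |t - x|) ^ 2) (𝓝[<] x) (𝓝 0) := by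
    have hsub : Tendsto (fun t => x - t) (𝓝[<] x) (𝓝 0) :=
      tendsto_nhdsWithin_of_tendsto_nhds (by simpa using (tendsto_id (x := 𝓝 x)).const_sub x)
    simpa using hsub.mul (((tendsto_norm_div_abs_sub_of_hasDerivAt hf hfx).mono_left
      (nhdsLT_le_nhdsNE _)).pow 2)
  refine hc.not_ge (ge_of_tendsto hlim ?_)
  filter_upwards [hle, self_mem_nhdsWithin] with t ht htx
  have hpos : 0 < x - t := sub_pos.2 htx
  rw [abs_sub_comm, abs_of_pos hpos, div_pow,
    show (x - t) * (‖f t‖ ^ 2 / (x - t) ^ 2) = ‖f t‖ ^ 2 / (x - t) by field_simp, le_div_iff₀ hpos]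
  exact ht

lemma not_eventually_mul_sq_le_sq_norm_sub_sq_norm {g : ℝ → E} (hf : HasDerivAt f D 1)
    (hf1 : f 1 = 0) (k : ℕ) (hg : ∀ᶠ t in 𝓝[<] 1, ‖g t‖ = t ^ k * ‖f t⁻¹‖) (hc : 0 < c) :
    ¬ ∀ᶠ t in 𝓝[<] 1, c * (1 - t) ^ 2 ≤ ‖f t‖ ^ 2 - ‖g t‖ ^ 2 := by
  intro hle
  set φ : ℝ → ℝ := fun t => ‖f t‖ / |t - 1|
  have hφ : Tendsto φ (𝓝[≠] 1) (𝓝 ‖D‖) := tendsto_norm_div_abs_sub_of_hasDerivAt hf hf1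
  have hinv : Tendsto (fun t : ℝ => t⁻¹) (𝓝[<] 1) (𝓝[≠] 1) := by
    refine tendsto_nhdsWithin_of_tendsto_nhds_of_eventually_within _ ?_ ?_
    · simpa using (tendsto_inv₀ (one_ne_zero (α := ℝ))).mono_left nhdsWithin_le_nhds
    · filter_upwards [self_mem_nhdsWithin] with t ht
      exact fun h => (ne_of_lt ht) (inv_eq_one.1 h)
  -- for `0 < t < 1` this is `‖g t‖ / (1 - t)`
  have hψ : Tendsto (fun t => t ^ k * φ t⁻¹ / t) (𝓝[<] 1) (𝓝 ‖D‖) := by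
    have h := (((tendsto_id.pow k).mono_left nhdsWithin_le_nhds).mul (hφ.comp hinv)).div
      (tendsto_id.mono_left nhdsWithin_le_nhds) one_ne_zero
    simp only [id, one_pow, one_mul, div_one] at h
    exact h
  have hlim : Tendsto (fun t => φ t ^ 2 - (t ^ k * φ t⁻¹ / t) ^ 2) (𝓝[<] 1) (𝓝 0) := by
    simpa using ((hφ.mono_left (nhdsLT_le_nhdsNE _)).pow 2).sub (hψ.pow 2)
  refine hc.not_ge (ge_of_tendsto hlim ?_)
  filter_upwards [hle, hg, Ioo_mem_nhdsLT zero_lt_one] with t hle hgt ⟨ht0, ht1⟩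
  have e : φ t ^ 2 - (t ^ k * φ t⁻¹ / t) ^ 2 = (‖f t‖ ^ 2 - ‖g t‖ ^ 2) / (1 - t) ^ 2 := by
    have h1 : |t - 1| = 1 - t := by rw [abs_sub_comm, abs_of_pos (sub_pos.2 ht1)]
    have h2 : |t⁻¹ - 1| = (1 - t) / t := by
      rw [abs_of_pos (sub_pos.2 (one_lt_inv₀ ht0 |>.2 ht1))]
      field_simp
    simp only [φ, hgt, h1, h2]
    field_simp
  rw [e, le_div_iff₀ (by nlinarith)]
  exact hle

end

lemma differentiable_evalP_ray (n m : ℕ) (a : ℕ → ℕ → ℂ) (z w : ℂ) :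
    Differentiable ℝ (fun t : ℝ => evalP n m a (t * z) (t * w)) := by
  unfold evalP
  fun_prop

lemma reflP_eq_mul_conj_evalP (n m : ℕ) (a : ℕ → ℕ → ℂ) {z w : ℂ} (hz : z ≠ 0) (hw : w ≠ 0) :
    reflP n m a z w = z ^ n * w ^ m * conj (evalP n m a (conj z)⁻¹ (conj w)⁻¹) := by
  simp only [reflP, evalP, map_sum, Finset.mul_sum]
  rw [← Finset.sum_range_reflect]
  refine Finset.sum_congr rfl fun j hj => ?_
  rw [← Finset.sum_range_reflect]
  refine Finset.sum_congr rfl fun k hk => ?_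
  have hj : j ≤ n := Nat.lt_succ_iff.1 (Finset.mem_range.1 hj)
  have hk : k ≤ m := Nat.lt_succ_iff.1 (Finset.mem_range.1 hk)
  simp only [add_tsub_cancel_right, map_mul, map_pow, map_inv₀, Complex.conj_conj]
  rw [Nat.sub_sub_self hj, Nat.sub_sub_self hk, pow_sub₀ z hz hj, pow_sub₀ w hw hk, inv_pow,
    inv_pow]
  ring

lemma norm_reflP_ray_of_norm_eq_one (n m : ℕ) (a : ℕ → ℕ → ℂ) {z w : ℂ} (hz : ‖z‖ = 1)
    (hw : ‖w‖ = 1) {t : ℝ} (ht : 0 < t) :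
    ‖reflP n m a (t * z) (t * w)‖ = t ^ (n + m) * ‖evalP n m a (t⁻¹ * z) (t⁻¹ * w)‖ := by
  have hz0 : z ≠ 0 := norm_ne_zero_iff.1 (hz ▸ one_ne_zero)
  have hw0 : w ≠ 0 := norm_ne_zero_iff.1 (hw ▸ one_ne_zero)
  have ht0 : (t : ℂ) ≠ 0 := Complex.ofReal_ne_zero.2 ht.ne'
  rw [reflP_eq_mul_conj_evalP n m a (mul_ne_zero ht0 hz0) (mul_ne_zero ht0 hw0)]
  simp only [map_mul, Complex.conj_ofReal, mul_inv, ← Complex.inv_eq_conj hz,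
    ← Complex.inv_eq_conj hw, inv_inv, norm_mul, norm_pow, Complex.norm_conj, hz, hw,
    Complex.norm_real, Real.norm_eq_abs, abs_of_pos ht, Complex.ofReal_inv]
  ring

lemma one_sub_sq_mul_one_sub_sq_mul_le {u v : ℝ} (hu : u ^ 2 ≤ 1) (hv : v ^ 2 ≤ 1) (t : ℝ) :
    (1 - t ^ 2) * (1 - t ^ 2 * (u * v) ^ 2) ≤ (1 - (t * u) ^ 2) * (1 - (t * v) ^ 2) := by
  have hdiff : (1 - (t * u) ^ 2) * (1 - (t * v) ^ 2) - (1 - t ^ 2) * (1 - t ^ 2 * (u * v) ^ 2)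
      = t ^ 2 * ((1 - u ^ 2) * (1 - v ^ 2)) := by ring
  nlinarith [mul_nonneg (sq_nonneg t) (mul_nonneg (sub_nonneg.2 hu) (sub_nonneg.2 hv))]

lemma le_apply_ray_of_forall_bidisk {F : ℂ → ℂ → ℝ} {c : ℝ} (hc : 0 ≤ c)
    (h : ∀ z w : ℂ, ‖z‖ ≤ 1 → ‖w‖ ≤ 1 → c * ((1 - ‖z‖ ^ 2) * (1 - ‖w‖ ^ 2)) ≤ F z w)
    {z w : ℂ} (hz : ‖z‖ ≤ 1) (hw : ‖w‖ ≤ 1) {t : ℝ} (ht0 : 0 ≤ t) (ht1 : t ≤ 1) :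
    c * ((1 - t ^ 2) * (1 - t ^ 2 * (‖z‖ * ‖w‖) ^ 2)) ≤ F (t * z) (t * w) := by
  have hnorm : ∀ x : ℂ, ‖(t : ℂ) * x‖ = t * ‖x‖ := fun x => by
    rw [norm_mul, Complex.norm_real, Real.norm_of_nonneg ht0]
  have hle : ∀ x : ℂ, ‖x‖ ≤ 1 → ‖(t : ℂ) * x‖ ≤ 1 := fun x hx => by
    rw [hnorm]
    exact mul_le_one₀ ht1 (norm_nonneg x) hx
  calc _ ≤ c * ((1 - ‖(t : ℂ) * z‖ ^ 2) * (1 - ‖(t : ℂ) * w‖ ^ 2)) := by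
        rw [hnorm, hnorm]
        exact mul_le_mul_of_nonneg_left (one_sub_sq_mul_one_sub_sq_mul_le
          (pow_le_one₀ (norm_nonneg z) hz) (pow_le_one₀ (norm_nonneg w) hw) t) hc
    _ ≤ _ := h _ _ (hle z hz) (hle w hw)

/-- If `|q|² - |q̃|² ≥ c(1-|z|²)(1-|w|²)` on the closed bidisk for some `c > 0`,
then `q` has no zeros in the closed bidisk. -/
theorem stmt_3 (n m : ℕ) (a : ℕ → ℕ → ℂ) (c : ℝ) (hc : 0 < c)
    (h : ∀ z w : ℂ, ‖z‖ ≤ 1 → ‖w‖ ≤ 1 →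
      c * ((1 - ‖z‖ ^ 2) * (1 - ‖w‖ ^ 2)) ≤
        ‖evalP n m a z w‖ ^ 2 - ‖reflP n m a z w‖ ^ 2) :
    ∀ z w : ℂ, ‖z‖ ≤ 1 → ‖w‖ ≤ 1 → evalP n m a z w ≠ 0 := by
  intro z w hz hw hq
  have hD := (differentiable_evalP_ray n m a z w 1).hasDerivAt
  have hq1 : evalP n m a ((1 : ℝ) * z) ((1 : ℝ) * w) = 0 := by simpa using hq
  have hray : ∀ t ∈ Ioo (0 : ℝ) 1, c * ((1 - t ^ 2) * (1 - t ^ 2 * (‖z‖ * ‖w‖) ^ 2)) ≤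
      ‖evalP n m a (t * z) (t * w)‖ ^ 2 - ‖reflP n m a (t * z) (t * w)‖ ^ 2 := fun t ht =>
    le_apply_ray_of_forall_bidisk hc.le h hz hw ht.1.le ht.2.le
  rcases (mul_le_one₀ hz (norm_nonneg w) hw).lt_or_eq with hp | hp
  · have hp2 : 0 < 1 - (‖z‖ * ‖w‖) ^ 2 := sub_pos.2 (pow_lt_one₀ (by positivity) hp two_ne_zero)
    refine not_eventually_mul_sub_le_sq_norm hD hq1 (mul_pos hc hp2) ?_
    filter_upwards [Ioo_mem_nhdsLT zero_lt_one] with t ⟨ht0, ht1⟩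
    have ht2 : t ^ 2 * (‖z‖ * ‖w‖) ^ 2 ≤ (‖z‖ * ‖w‖) ^ 2 :=
      mul_le_of_le_one_left (sq_nonneg _) (pow_le_one₀ ht0.le ht1.le)
    nlinarith [hray t ⟨ht0, ht1⟩, sq_nonneg ‖reflP n m a (t * z) (t * w)‖,
      mul_le_mul_of_nonneg_left ht2 (mul_pos hc (sub_pos.2 ht1)).le]
  · have hz1 : ‖z‖ = 1 := by nlinarith [norm_nonneg z]
    have hw1 : ‖w‖ = 1 := by nlinarith [norm_nonneg w]
    refine not_eventually_mul_sq_le_sq_norm_sub_sq_norm hD hq1 (n + m)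
      (g := fun t : ℝ => reflP n m a (t * z) (t * w)) ?_ hc ?_
    · filter_upwards [Ioo_mem_nhdsLT zero_lt_one] with t ht
      exact norm_reflP_ray_of_norm_eq_one n m a hz1 hw1 ht.1
    · filter_upwards [Ioo_mem_nhdsLT zero_lt_one] with t ⟨ht0, ht1⟩
      have hbound := hray t ⟨ht0, ht1⟩
      rw [hp] at hbound
      nlinarith [mul_nonneg hc.le (mul_nonneg (sq_nonneg (1 - t)) (mul_nonneg ht0.le
        (by linarith : (0 : ℝ) ≤ t + 2)))]
end

section
/- Let q be a polynomial of bidegree (n,m) with no zeros on the closed bidisk, and let μ be its Bernstein–Szegő measure. Then for any f ∈ H^2(T^2) and any j ≥ 0, k ≥ 0 with j < n or k < m, the product f·q̃ is orthogonal in L^2(μ) to z^j w^k, where q̃ is the reflection of q at degree (n,m). -/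
open ComplexConjugate

/-- An `H²(T²)` function with absolutely summable Taylor coefficients `b`. -/
noncomputable def h2fun (b : ℕ × ℕ → ℂ) (z w : ℂ) : ℂ := ∑' p : ℕ × ℕ, b p * z ^ p.1 * w ^ p.2

/-- Point on the unit circle. -/
noncomputable def tor (θ : ℝ) : ℂ := Complex.exp (θ * Complex.I)

/-! On the torus `conj z = z⁻¹`, so `q̃ = z^n w^m conj q` and `|q|² = q conj q`; hence the
integrand `f q̃ conj (z^j w^k) c² / |q|²` equals `c² z^(n-j) w^(m-k) f / q`. By stability, and
since the Taylor series of `f` converges absolutely on the closed bidisk, `f / q` is in each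
variable holomorphic on the open disk and continuous on the closed one. So when `k < m` the inner
`φ`-integral is, by Cauchy's theorem, zero; when `j < n` one first swaps the two integrals (the
integrand is continuous) and argues in `z`. -/

open Metric

lemma tor_eq_circleMap (θ : ℝ) : tor θ = circleMap 0 1 θ := by
  simp [tor, circleMap]

lemma norm_tor (θ : ℝ) : ‖tor θ‖ = 1 := by
  simp [tor, Complex.norm_exp]

lemma tor_ne_zero (θ : ℝ) : tor θ ≠ 0 := Complex.exp_ne_zero _

@[fun_prop]
lemma continuous_tor : Continuous tor := by
  unfold tor; fun_prop

lemma integral_tor_zpow_mul_eq_zero {g : ℂ → ℂ} (hg : DiffContOnCl ℂ g (ball 0 1))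
    {r : ℤ} (hr : 0 < r) :
    ∫ θ in (0 : ℝ)..(2 * Real.pi), tor θ ^ r * g (tor θ) = 0 := by
  obtain ⟨s, rfl⟩ : ∃ s : ℕ, r = s + 1 := ⟨(r - 1).toNat, by omega⟩
  have hcauchy : (∮ z in C(0, 1), z ^ s * g z) = 0 :=
    ((differentiable_pow s).diffContOnCl.smul hg).circleIntegral_eq_zero zero_le_one
  have hI : ∀ θ : ℝ, deriv (circleMap 0 1) θ • (circleMap 0 1 θ ^ s * g (circleMap 0 1 θ))
      = Complex.I * (tor θ ^ ((s : ℤ) + 1) * g (tor θ)) := by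
    intro θ
    rw [deriv_circleMap, ← tor_eq_circleMap, smul_eq_mul, zpow_add_one₀ (tor_ne_zero θ),
      zpow_natCast]
    ring
  simp only [circleIntegral, hI, intervalIntegral.integral_const_mul] at hcauchy
  simpa [Complex.I_ne_zero] using hcauchy

lemma diffContOnCl_tsum_ball {ι : Type*} {F : ι → ℂ → ℂ} {u : ι → ℝ} (hu : Summable u)
    (hF : ∀ i, Differentiable ℂ (F i)) {c : ℂ} {R : ℝ}
    (hle : ∀ i, ∀ z ∈ closedBall c R, ‖F i z‖ ≤ u i) :
    DiffContOnCl ℂ (fun z => ∑' i, F i z) (ball c R) :=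
  .mk_ball
    (Complex.differentiableOn_tsum_of_summable_norm hu (fun i => (hF i).differentiableOn)
      isOpen_ball fun i z hz => hle i z (ball_subset_closedBall hz))
    (continuousOn_tsum (fun i => (hF i).continuous.continuousOn) hu hle)

lemma norm_h2fun_term_le (b : ℕ × ℕ → ℂ) (p : ℕ × ℕ) {z w : ℂ} (hz : ‖z‖ ≤ 1) (hw : ‖w‖ ≤ 1) :
    ‖b p * z ^ p.1 * w ^ p.2‖ ≤ ‖b p‖ := by
  rw [norm_mul, norm_mul, norm_pow, norm_pow, mul_assoc]
  exact mul_le_of_le_one_right (norm_nonneg _) (mul_le_one₀ (pow_le_one₀ (norm_nonneg _) hz)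
    (pow_nonneg (norm_nonneg _) _) (pow_le_one₀ (norm_nonneg _) hw))

section Slices

variable {b : ℕ × ℕ → ℂ} (hb : Summable fun p => ‖b p‖)
include hb

lemma diffContOnCl_h2fun_left {w : ℂ} (hw : ‖w‖ ≤ 1) :
    DiffContOnCl ℂ (fun z => h2fun b z w) (ball 0 1) :=
  diffContOnCl_tsum_ball hb (fun _ => by fun_prop)
    fun p z hz => norm_h2fun_term_le b p (mem_closedBall_zero_iff.mp hz) hw

lemma diffContOnCl_h2fun_right {z : ℂ} (hz : ‖z‖ ≤ 1) :
    DiffContOnCl ℂ (h2fun b z) (ball 0 1) :=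
  diffContOnCl_tsum_ball hb (fun _ => by fun_prop)
    fun p w hw => norm_h2fun_term_le b p hz (mem_closedBall_zero_iff.mp hw)

lemma continuous_h2fun_tor : Continuous fun p : ℝ × ℝ => h2fun b (tor p.1) (tor p.2) :=
  continuous_tsum (fun _ => by fun_prop) hb
    fun q p => norm_h2fun_term_le b q (norm_tor p.1).le (norm_tor p.2).le

end Slices

section Polynomial

variable (n m : ℕ) (a : ℕ → ℕ → ℂ)

lemma differentiable_evalP_left (w : ℂ) : Differentiable ℂ fun z => evalP n m a z w := by
  unfold evalP; fun_prop

lemma differentiable_evalP_right (z : ℂ) : Differentiable ℂ (evalP n m a z) := by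
  unfold evalP; fun_prop

lemma continuous_evalP_tor : Continuous fun p : ℝ × ℝ => evalP n m a (tor p.1) (tor p.2) := by
  unfold evalP; fun_prop

lemma reflP_of_norm_eq_one {z w : ℂ} (hz : ‖z‖ = 1) (hw : ‖w‖ = 1) :
    reflP n m a z w = z ^ n * w ^ m * conj (evalP n m a z w) := by
  have hz0 : z ≠ 0 := by rintro rfl; simp at hz
  have hw0 : w ≠ 0 := by rintro rfl; simp at hw
  unfold reflP evalP
  rw [← Finset.sum_range_reflect, map_sum, Finset.mul_sum]
  refine Finset.sum_congr rfl fun j hj => ?_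
  rw [← Finset.sum_range_reflect, map_sum, Finset.mul_sum]
  refine Finset.sum_congr rfl fun k hk => ?_
  have hj : j ≤ n := Nat.lt_succ_iff.mp (Finset.mem_range.mp hj)
  have hk : k ≤ m := Nat.lt_succ_iff.mp (Finset.mem_range.mp hk)
  simp only [add_tsub_cancel_right, Nat.sub_sub_self hj, Nat.sub_sub_self hk, map_mul, map_pow,
    ← Complex.inv_eq_conj hz, ← Complex.inv_eq_conj hw, pow_sub₀ z hz0 hj, pow_sub₀ w hw0 hk]
  ring

end Polynomial

lemma integrand_eq_of_norm_eq_one {n m : ℕ} {a : ℕ → ℕ → ℂ} {z w : ℂ} (hz : ‖z‖ = 1)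
    (hw : ‖w‖ = 1) (hq : evalP n m a z w ≠ 0) (F C : ℂ) (j k : ℕ) :
    F * reflP n m a z w * conj (z ^ j * w ^ k) * (C / (‖evalP n m a z w‖ : ℂ) ^ 2)
      = C * z ^ ((n : ℤ) - j) * w ^ ((m : ℤ) - k) * (F / evalP n m a z w) := by
  have hz0 : z ≠ 0 := by rintro rfl; simp at hz
  have hw0 : w ≠ 0 := by rintro rfl; simp at hw
  have hqc : conj (evalP n m a z w) ≠ 0 := (map_ne_zero _).mpr hq
  rw [reflP_of_norm_eq_one n m a hz hw, ← Complex.mul_conj', map_mul, map_pow, map_pow,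
    ← Complex.inv_eq_conj hz, ← Complex.inv_eq_conj hw, zpow_sub₀ hz0, zpow_sub₀ hw0,
    zpow_natCast, zpow_natCast, zpow_natCast, zpow_natCast, inv_pow, inv_pow]
  field_simp

section Vanishing

variable {n m : ℕ} {a : ℕ → ℕ → ℂ}
  (hstable : ∀ z w : ℂ, ‖z‖ ≤ 1 → ‖w‖ ≤ 1 → evalP n m a z w ≠ 0)
  {b : ℕ × ℕ → ℂ} (hb : Summable fun p => ‖b p‖)
include hstable hb

lemma diffContOnCl_h2fun_div_evalP_left {w : ℂ} (hw : ‖w‖ ≤ 1) :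
    DiffContOnCl ℂ (fun z => h2fun b z w / evalP n m a z w) (ball 0 1) := by
  have hq : ∀ z ∈ closure (ball (0 : ℂ) 1), evalP n m a z w ≠ 0 := fun z hz =>
    hstable z w (by rwa [closure_ball _ one_ne_zero, mem_closedBall_zero_iff] at hz) hw
  simpa only [smul_eq_mul, div_eq_inv_mul, Pi.inv_apply] using
    ((differentiable_evalP_left n m a w).diffContOnCl.inv hq).smul
      (diffContOnCl_h2fun_left hb hw)

lemma diffContOnCl_h2fun_div_evalP_right {z : ℂ} (hz : ‖z‖ ≤ 1) :
    DiffContOnCl ℂ (fun w => h2fun b z w / evalP n m a z w) (ball 0 1) := by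
  have hq : ∀ w ∈ closure (ball (0 : ℂ) 1), evalP n m a z w ≠ 0 := fun w hw =>
    hstable z w hz (by rwa [closure_ball _ one_ne_zero, mem_closedBall_zero_iff] at hw)
  simpa only [smul_eq_mul, div_eq_inv_mul, Pi.inv_apply] using
    ((differentiable_evalP_right n m a z).diffContOnCl.inv hq).smul
      (diffContOnCl_h2fun_right hb hz)

lemma integral_h2fun_div_evalP_left_eq_zero (C : ℂ) {r : ℤ} (hr : 0 < r) (s : ℤ) (φ : ℝ) :
    ∫ θ in (0 : ℝ)..(2 * Real.pi), C * tor θ ^ r * tor φ ^ s *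
      (h2fun b (tor θ) (tor φ) / evalP n m a (tor θ) (tor φ)) = 0 := by
  have hassoc : ∀ θ, C * tor θ ^ r * tor φ ^ s *
      (h2fun b (tor θ) (tor φ) / evalP n m a (tor θ) (tor φ))
        = C * tor φ ^ s * (tor θ ^ r * (h2fun b (tor θ) (tor φ) / evalP n m a (tor θ) (tor φ))) :=
    fun θ => by ring
  simp_rw [hassoc]
  rw [intervalIntegral.integral_const_mul, integral_tor_zpow_mul_eq_zero
    (diffContOnCl_h2fun_div_evalP_left hstable hb (norm_tor φ).le) hr, mul_zero]

lemma integral_h2fun_div_evalP_right_eq_zero (C : ℂ) (r : ℤ) {s : ℤ} (hs : 0 < s) (θ : ℝ) :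
    ∫ φ in (0 : ℝ)..(2 * Real.pi), C * tor θ ^ r * tor φ ^ s *
      (h2fun b (tor θ) (tor φ) / evalP n m a (tor θ) (tor φ)) = 0 := by
  simp_rw [mul_assoc (C * tor θ ^ r)]
  rw [intervalIntegral.integral_const_mul, integral_tor_zpow_mul_eq_zero
    (diffContOnCl_h2fun_div_evalP_right hstable hb (norm_tor θ).le) hs, mul_zero]

lemma continuous_zpow_mul_h2fun_div_evalP (C : ℂ) (r s : ℤ) :
    Continuous (Function.uncurry fun θ φ => C * tor θ ^ r * tor φ ^ s *
      (h2fun b (tor θ) (tor φ) / evalP n m a (tor θ) (tor φ))) := by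
  have hzpow (r : ℤ) : Continuous fun θ => tor θ ^ r :=
    continuous_tor.zpow₀ r fun θ => .inl (tor_ne_zero θ)
  exact ((continuous_const.mul ((hzpow r).comp continuous_fst)).mul
    ((hzpow s).comp continuous_snd)).mul ((continuous_h2fun_tor hb).div
      (continuous_evalP_tor n m a) fun p => hstable _ _ (norm_tor p.1).le (norm_tor p.2).le)

lemma integral_integral_h2fun_div_evalP_eq_zero_of_pos_left (C : ℂ) {r : ℤ} (hr : 0 < r) (s : ℤ) :
    ∫ θ in (0 : ℝ)..(2 * Real.pi), ∫ φ in (0 : ℝ)..(2 * Real.pi), C * tor θ ^ r * tor φ ^ s *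
      (h2fun b (tor θ) (tor φ) / evalP n m a (tor θ) (tor φ)) = 0 := by
  rw [MeasureTheory.intervalIntegral_intervalIntegral_swap
    (((continuous_zpow_mul_h2fun_div_evalP hstable hb C r s).continuousOn.integrableOn_compact
      (isCompact_uIcc.prod isCompact_uIcc)).mono_set
        (Set.prod_mono Set.uIoc_subset_uIcc Set.uIoc_subset_uIcc))]
  simp only [integral_h2fun_div_evalP_left_eq_zero hstable hb C hr s,
    intervalIntegral.integral_zero]

lemma integral_integral_h2fun_div_evalP_eq_zero_of_pos_right (C : ℂ) (r : ℤ) {s : ℤ} (hs : 0 < s) :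
    ∫ θ in (0 : ℝ)..(2 * Real.pi), ∫ φ in (0 : ℝ)..(2 * Real.pi), C * tor θ ^ r * tor φ ^ s *
      (h2fun b (tor θ) (tor φ) / evalP n m a (tor θ) (tor φ)) = 0 := by
  simp only [integral_h2fun_div_evalP_right_eq_zero hstable hb C r hs,
    intervalIntegral.integral_zero]

end Vanishing

theorem stmt_10_general (n m : ℕ) (a : ℕ → ℕ → ℂ)
    (hstable : ∀ z w : ℂ, ‖z‖ ≤ 1 → ‖w‖ ≤ 1 → evalP n m a z w ≠ 0)
    (c : ℝ)
    (b : ℕ × ℕ → ℂ) (hb : Summable fun p => ‖b p‖) :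
    ∀ j k : ℕ, (j < n ∨ k < m) →
      (1 / (2 * Real.pi) ^ 2 : ℂ) *
        (∫ θ in (0 : ℝ)..(2 * Real.pi), ∫ φ in (0 : ℝ)..(2 * Real.pi),
          h2fun b (tor θ) (tor φ) * reflP n m a (tor θ) (tor φ) *
            conj ((tor θ) ^ j * (tor φ) ^ k) *
              ((c : ℂ) ^ 2 / (‖evalP n m a (tor θ) (tor φ)‖ : ℂ) ^ 2)) = 0 := by
  intro j k hjk
  simp_rw [fun θ φ => integrand_eq_of_norm_eq_one (norm_tor θ) (norm_tor φ)
    (hstable _ _ (norm_tor θ).le (norm_tor φ).le)]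
  rcases hjk with hj | hk
  · rw [integral_integral_h2fun_div_evalP_eq_zero_of_pos_left hstable hb _ (by omega), mul_zero]
  · rw [integral_integral_h2fun_div_evalP_eq_zero_of_pos_right hstable hb _ _ (by omega), mul_zero]

/-- If `q` is stable with Bernstein–Szegő measure `μ`, then for any `f ∈ H²(T²)` and
`j < n` or `k < m`, the product `f·q̃` is `μ`-orthogonal to `z^j w^k`. -/
theorem stmt_10 (n m : ℕ) (a : ℕ → ℕ → ℂ)
    (hstable : ∀ z w : ℂ, ‖z‖ ≤ 1 → ‖w‖ ≤ 1 → evalP n m a z w ≠ 0)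
    (c : ℝ) (hc : 0 < c)
    (hprob : (1 / (2 * Real.pi) ^ 2) *
        (∫ θ in (0 : ℝ)..(2 * Real.pi), ∫ φ in (0 : ℝ)..(2 * Real.pi),
          c ^ 2 / ‖evalP n m a (tor θ) (tor φ)‖ ^ 2) = 1)
    (b : ℕ × ℕ → ℂ) (hb : Summable fun p => ‖b p‖) :
    ∀ j k : ℕ, (j < n ∨ k < m) →
      (1 / (2 * Real.pi) ^ 2 : ℂ) *
        (∫ θ in (0 : ℝ)..(2 * Real.pi), ∫ φ in (0 : ℝ)..(2 * Real.pi),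
          h2fun b (tor θ) (tor φ) * reflP n m a (tor θ) (tor φ) *
            conj ((tor θ) ^ j * (tor φ) ^ k) *
              ((c : ℂ) ^ 2 / (‖evalP n m a (tor θ) (tor φ)‖ : ℂ) ^ 2)) = 0 :=
  stmt_10_general n m a hstable c b hb
end

section
/- Let P and Q be relatively prime two-variable polynomials with |P(z,w)| ≥ |Q(z,w)| on the open bidisk and |P(z,w)| = |Q(z,w)| on T^2, with P not identically zero. Then P has no zeros in the open bidisk. -/
/-!
If `P(z₀, w₀) = 0` in the bidisk, then `|Q| ≤ |P|` forces `Q` to vanish wherever `P` does in the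
bidisk. If the slice `P(z₀, ·)` is identically zero, so is `Q(z₀, ·)`, and `z - z₀` divides both.
Otherwise `w₀` is an isolated zero of `P(z₀, ·)`, and by the minimum modulus principle it persists:
for every `z` near `z₀` there is a zero `(z, w)` of `P`, hence of `Q`, in the bidisk. But coprime
`P, Q ∈ ℂ[z][w]` satisfy a Bézout relation `u P + v Q = a(z)` with `a ≠ 0` (Gauss's lemma), so
their common zeros lie over the finitely many roots of `a`.
-/

open Polynomial Polynomial.Bivariate Filter Topology Metric
open scoped nonZeroDivisors

namespace Polynomial

section FractionRing

variable {R K : Type*} [CommRing R] [IsDomain R] [Field K] [Algebra R K] [IsFractionRing R K]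

theorem isCoprime_map_fractionRing_of_isRelPrime [NormalizedGCDMonoid R] {p q : R[X]}
    (hp : p ≠ 0) (h : IsRelPrime p q) :
    IsCoprime (p.map (algebraMap R K)) (q.map (algebraMap R K)) := by
  refine IsRelPrime.isCoprime fun d hdp hdq => ?_
  have hd : d ≠ 0 := by
    rintro rfl
    exact hp (map_injective _ (IsFractionRing.injective R K) (by simpa using hdp))
  set d' := (IsLocalization.integerNormalization R⁰ d).primPart
  have hd'd : d'.map (algebraMap R K) ∣ d := by
    obtain ⟨b, hb, hspec⟩ := IsLocalization.integerNormalization_spec R⁰ d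
    have hb' : IsUnit (C (algebraMap R K b)) :=
      isUnit_C.mpr (isUnit_iff_ne_zero.mpr (IsFractionRing.to_map_ne_zero_of_mem_nonZeroDivisors hb))
    rw [← hb'.dvd_mul_left, ← smul_eq_C_mul, algebraMap_smul, ← hspec,
      eq_C_content_mul_primPart (IsLocalization.integerNormalization R⁰ d), Polynomial.map_mul]
    exact dvd_mul_left _ _
  have hprim := isPrimitive_primPart (IsLocalization.integerNormalization R⁰ d)
  exact isUnit_or_eq_zero_of_isUnit_integerNormalization_primPart hd
    (h (hprim.dvd_of_fraction_map_dvd_fraction_map (hd'd.trans hdp))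
      (hprim.dvd_of_fraction_map_dvd_fraction_map (hd'd.trans hdq)))

attribute [local instance] Polynomial.algebra in
theorem exists_mul_add_mul_eq_C_of_isCoprime_map {p q : R[X]}
    (h : IsCoprime (p.map (algebraMap R K)) (q.map (algebraMap R K))) :
    ∃ a ≠ (0 : R), ∃ u v : R[X], u * p + v * q = C a := by
  have := Polynomial.isLocalization R⁰ K
  have htop : (Ideal.span {p, q}).map (algebraMap R[X] K[X]) = ⊤ := by
    rw [Ideal.map_span, Set.image_pair, Ideal.eq_top_iff_one, Ideal.mem_span_pair]
    obtain ⟨u, v, huv⟩ := h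
    exact ⟨u, v, huv⟩
  obtain ⟨_, ⟨a, ha, rfl⟩, hmem⟩ := Set.not_disjoint_iff.mp fun hdisj =>
    (IsLocalization.map_algebraMap_ne_top_iff_disjoint (R⁰.map C) K[X] _).mpr hdisj htop
  exact ⟨a, nonZeroDivisors.ne_zero ha, Ideal.mem_span_pair.mp hmem⟩

end FractionRing

theorem eq_zero_of_eventually_isRoot {R : Type*} [CommRing R] [IsDomain R]
    [TopologicalSpace R] [T1Space R] {p : R[X]} {x : R} [(𝓝[≠] x).NeBot]
    (h : ∀ᶠ y in 𝓝 x, p.IsRoot y) : p = 0 := by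
  by_contra hp
  obtain ⟨y, hy, hy'⟩ :=
    ((eventually_cofinite_not_isRoot hp).filter_mono (nhdsNE_le_cofinite x)).and
      (nhdsWithin_le_nhds h) |>.exists
  exact hy hy'

theorem C_X_sub_C_dvd_of_map_evalRingHom_eq_zero {R : Type*} [CommRing R]
    {p : R[X][X]} {x : R} (h : p.map (evalRingHom x) = 0) : C (X - C x) ∣ p := by
  refine C_dvd_iff_dvd_coeff _ _ |>.mpr fun i => dvd_iff_isRoot.mpr ?_
  simpa [coeff_map] using congrArg (coeff · i) h

theorem Bivariate.eval_equivMvPolynomial {R : Type*} [CommSemiring R] (x y : R)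
    (p : R[X][Y]) : MvPolynomial.eval ![x, y] (equivMvPolynomial R p) = p.evalEval x y := by
  rw [← coe_aevalAeval_eq_evalEval]
  change (MvPolynomial.aeval ![x, y]).comp (equivMvPolynomial R).toAlgHom p = _
  congr 1
  ext <;> simp [equivMvPolynomial]

theorem continuous_evalEval {R : Type*} [CommSemiring R] [TopologicalSpace R]
    [IsTopologicalSemiring R] (p : R[X][Y]) :
    Continuous fun xy : R × R => p.evalEval xy.1 xy.2 := by
  simp_rw [← eval_equivMvPolynomial]
  exact (MvPolynomial.continuous_eval _).comp (by fun_prop)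

end Polynomial

namespace Complex

theorem exists_mem_closure_eq_zero_of_forall_mem_frontier_norm_lt {E : Type*}
    [NormedAddCommGroup E] [NormedSpace ℂ E] [Nontrivial E] [FiniteDimensional ℂ E]
    {f : E → ℂ} {U : Set E} {c : E} (hb : Bornology.IsBounded U) (hd : DiffContOnCl ℂ f U)
    (hc : c ∈ U) (h : ∀ w ∈ frontier U, ‖f c‖ < ‖f w‖) : ∃ w ∈ closure U, f w = 0 := by
  by_contra! hne
  obtain ⟨w, hw, hmax⟩ := exists_mem_frontier_isMaxOn_norm hb ⟨c, hc⟩ (hd.inv hne)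
  have hcw : ‖(f c)⁻¹‖ ≤ ‖(f w)⁻¹‖ := hmax (subset_closure hc)
  rw [norm_inv, norm_inv, inv_le_inv₀ (norm_pos_iff.mpr (hne c (subset_closure hc)))
    (norm_pos_iff.mpr (hne w (frontier_subset_closure hw)))] at hcw
  exact (h w hw).not_ge hcw

theorem eventually_exists_mem_eq_zero_of_isolated_zero {X : Type*} [TopologicalSpace X]
    {G : X → ℂ → ℂ} {x₀ : X} {w₀ : ℂ} {U : Set ℂ} (hG : Continuous (Function.uncurry G))
    (hd : ∀ x, DifferentiableOn ℂ (G x) U) (hU : U ∈ 𝓝 w₀) (h₀ : G x₀ w₀ = 0)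
    (hiso : ∀ᶠ w in 𝓝[≠] w₀, G x₀ w ≠ 0) :
    ∀ᶠ x in 𝓝 x₀, ∃ w ∈ U, G x w = 0 := by
  obtain ⟨ε, hε, hball⟩ :=
    Metric.eventually_nhds_iff.mp ((eventually_nhdsWithin_iff.mp hiso).and hU)
  set r := ε / 2
  have hr : 0 < r := half_pos hε
  have hsub : closedBall w₀ r ⊆ U := fun w hw =>
    (hball ((mem_closedBall.mp hw).trans_lt (half_lt_self hε))).2
  have hsphere : ∀ w ∈ sphere w₀ r, G x₀ w ≠ 0 := fun w hw =>
    (hball ((mem_sphere.mp hw).trans_lt (half_lt_self hε))).1 (ne_of_mem_sphere hw hr.ne')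
  have hnear : ∀ᶠ x in 𝓝 x₀, ∀ w ∈ sphere w₀ r, ‖G x w₀‖ < ‖G x w‖ :=
    (isCompact_sphere w₀ r).eventually_forall_of_forall_eventually fun w hw =>
      (isOpen_lt (hG.comp (continuous_fst.prodMk continuous_const)).norm hG.norm).mem_nhds
        (by simpa [h₀] using hsphere w hw)
  filter_upwards [hnear] with x hx
  obtain ⟨w, hw, hGw⟩ := exists_mem_closure_eq_zero_of_forall_mem_frontier_norm_lt isBounded_ball
    (((hd x).mono ((closure_ball w₀ hr.ne').symm ▸ hsub)).diffContOnCl) (mem_ball_self hr)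
    (by rwa [frontier_ball w₀ hr.ne'])
  exact ⟨w, hsub (closure_ball w₀ hr.ne' ▸ hw), hGw⟩

end Complex

theorem Polynomial.eventually_exists_mem_evalEval_eq_zero {p : ℂ[X][Y]} {z₀ w₀ : ℂ} {U : Set ℂ}
    (hslice : p.map (evalRingHom z₀) ≠ 0) (hU : U ∈ 𝓝 w₀) (h₀ : p.evalEval z₀ w₀ = 0) :
    ∀ᶠ z in 𝓝 z₀, ∃ w ∈ U, p.evalEval z w = 0 :=
  Complex.eventually_exists_mem_eq_zero_of_isolated_zero (G := fun z w => p.evalEval z w)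
    (continuous_evalEval p)
    (fun z => by simpa only [← map_evalRingHom_eval] using (p.map _).differentiable.differentiableOn)
    hU h₀ (by
      simp_rw [← map_evalRingHom_eval]
      exact (eventually_cofinite_not_isRoot hslice).filter_mono (nhdsNE_le_cofinite w₀))

theorem stmt_15_general (P Q : MvPolynomial (Fin 2) ℂ)
    (hcoprime : ∀ d : MvPolynomial (Fin 2) ℂ, d ∣ P → d ∣ Q → IsUnit d)
    (hP : P ≠ 0)
    (hge : ∀ z w : ℂ, ‖z‖ < 1 → ‖w‖ < 1 →
      ‖MvPolynomial.eval ![z, w] Q‖ ≤ ‖MvPolynomial.eval ![z, w] P‖) :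
    ∀ z w : ℂ, ‖z‖ < 1 → ‖w‖ < 1 →
      MvPolynomial.eval ![z, w] P ≠ 0 := by
  obtain ⟨p, rfl⟩ := (equivMvPolynomial ℂ).surjective P
  obtain ⟨q, rfl⟩ := (equivMvPolynomial ℂ).surjective Q
  simp only [eval_equivMvPolynomial, ← mem_ball_zero_iff] at hge ⊢
  have hrel : IsRelPrime p q := IsRelPrime.of_map (equivMvPolynomial ℂ) hcoprime
  have hq_of_hp : ∀ z ∈ ball (0 : ℂ) 1, ∀ w ∈ ball (0 : ℂ) 1,
      p.evalEval z w = 0 → q.evalEval z w = 0 := fun z hz w hw hpzw => by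
    simpa [hpzw] using hge z w hz hw
  intro z₀ w₀ hz₀ hw₀ hzero
  by_cases hslice : p.map (evalRingHom z₀) = 0
  · have hqslice : q.map (evalRingHom z₀) = 0 := eq_zero_of_eventually_isRoot (x := 0) <|
      eventually_of_mem (ball_mem_nhds 0 one_pos) fun w hw => by
        simpa [IsRoot, map_evalRingHom_eval] using
          hq_of_hp z₀ hz₀ w hw (by rw [← map_evalRingHom_eval, hslice, eval_zero])
    exact not_isUnit_X_sub_C z₀ <| isUnit_C.mp <|
      hrel (C_X_sub_C_dvd_of_map_evalRingHom_eq_zero hslice)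
        (C_X_sub_C_dvd_of_map_evalRingHom_eq_zero hqslice)
  · have hp : p ≠ 0 := by rintro rfl; exact hP (map_zero _)
    obtain ⟨a, ha, u, v, huv⟩ := exists_mul_add_mul_eq_C_of_isCoprime_map
      (isCoprime_map_fractionRing_of_isRelPrime (K := FractionRing ℂ[X]) hp hrel)
    refine ha (eq_zero_of_eventually_isRoot (x := z₀) ?_)
    filter_upwards [eventually_exists_mem_evalEval_eq_zero hslice (isOpen_ball.mem_nhds hw₀) hzero,
      isOpen_ball.mem_nhds hz₀] with z ⟨w, hw, hpzw⟩ hz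
    simpa [hpzw, hq_of_hp z hz w hw hpzw, evalEval_C, eq_comm] using congrArg (evalEval z w) huv

/-- If `P` and `Q` are relatively prime two-variable polynomials with `|P| ≥ |Q|` on the
open bidisk and `|P| = |Q|` on the 2-torus, and `P` is not identically zero, then `P` has
no zeros in the open bidisk. -/
theorem stmt_15 (P Q : MvPolynomial (Fin 2) ℂ)
    (hcoprime : ∀ d : MvPolynomial (Fin 2) ℂ, d ∣ P → d ∣ Q → IsUnit d)
    (hP : P ≠ 0)
    (hge : ∀ z w : ℂ, ‖z‖ < 1 → ‖w‖ < 1 →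
      ‖MvPolynomial.eval ![z, w] Q‖ ≤ ‖MvPolynomial.eval ![z, w] P‖)
    (heq : ∀ z w : ℂ, ‖z‖ = 1 → ‖w‖ = 1 →
      ‖MvPolynomial.eval ![z, w] P‖ = ‖MvPolynomial.eval ![z, w] Q‖) :
    ∀ z w : ℂ, ‖z‖ < 1 → ‖w‖ < 1 →
      MvPolynomial.eval ![z, w] P ≠ 0 :=
  stmt_15_general P Q hcoprime hP hge
end
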